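/- Let m ∈ ℕ, let Y, A : Fin m → ℝ take values in {0,1}, let r : Fin m → ℝ be nonnegative, and let λ : Fin m → ℝ. Let X be the m × 2 real matrix with columns X_{i,0} = Y_i and X_{i,1} = Y_i·A_i and let R be the m × m diagonal matrix with diagonal entries Y_i·r_i. Assume a := ∑_i r_i·Y_i·(1 − A_i) > 0 and b := ∑_i r_i·Y_i·A_i > 0. Then the vector (Xᵀ R X)^{−1} Xᵀ R λ ∈ ℝ² has first component H⁰ := (∑_i r_i·Y_i·(1 − A_i)·λ_i)/a and second component H¹ − H⁰, where H¹ := (∑_i r_i·Y_i·A_i·λ_i)/b; i.e. the weighted least-squares integrand of the additive hazard estimator is (H⁰, H¹ − H⁰). -/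

import Mathlib

/-!
Since `Y` and `A` are `0/1`-valued, the Gram matrix `XᵀRX` is `!![a + b, b; b, b]` and the
moment vector `XᵀRλ` is `(a H⁰ + b H¹, b H¹)`. Instead of inverting, one checks that
`(H⁰, H¹ - H⁰)` solves the normal equations `XᵀRX v = XᵀRλ`; as `det (XᵀRX) = a b ≠ 0`, this
solution is `(XᵀRX)⁻¹ XᵀRλ`.
-/

open Matrix

namespace Matrix

section TransposeDiagonal

variable {m n R : Type*} [Fintype m] [DecidableEq m] [CommSemiring R]

lemma transpose_mul_diagonal_mul_apply (X : Matrix m n R) (w : m → R) (j k : n) :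
    (Xᵀ * diagonal w * X) j k = ∑ i, w i * X i j * X i k := by
  rw [mul_apply]
  simp only [mul_diagonal, transpose_apply]
  exact Finset.sum_congr rfl fun i _ => by ring

lemma transpose_mul_diagonal_mulVec_apply (X : Matrix m n R) (w y : m → R) (j : n) :
    ((Xᵀ * diagonal w) *ᵥ y) j = ∑ i, w i * X i j * y i := by
  simp only [mulVec, dotProduct, mul_diagonal, transpose_apply]
  exact Finset.sum_congr rfl fun i _ => by ring

end TransposeDiagonal

lemma inv_mul_mulVec_eq_of_mulVec_eq {m n K : Type*} [Fintype m] [Fintype n] [DecidableEq n]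
    [Field K] {M : Matrix n n K} {B : Matrix n m K} {v : n → K} {y : m → K}
    (hM : IsUnit M.det) (hv : M *ᵥ v = B *ᵥ y) : (M⁻¹ * B) *ᵥ y = v := by
  rw [← mulVec_mulVec, ← hv, mulVec_mulVec, nonsing_inv_mul M hM, one_mulVec]

end Matrix

lemma two_group_gram_mulVec {K : Type*} [Field K] {a b : K} (ha : a ≠ 0) (hb : b ≠ 0) (c d : K) :
    !![a + b, b; b, b] *ᵥ ![c / a, d / b - c / a] = ![c + d, d] := by
  rw [mulVec_fin_two]
  simp only [of_apply, cons_val', cons_val_zero, cons_val_one, cons_val_fin_one, empty_val']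
  congr 1
  · field_simp; ring
  · congr 1; field_simp; ring

section IndicatorDesign

variable {ι K : Type*} [Fintype ι] [DecidableEq ι] [CommRing K] {Y A r : ι → K}
  {X : Matrix ι (Fin 2) K}

lemma indicator_design_gram (hY : ∀ i, Y i = 0 ∨ Y i = 1) (hA : ∀ i, A i = 0 ∨ A i = 1)
    (hX : ∀ i, X i 0 = Y i ∧ X i 1 = Y i * A i) :
    Xᵀ * diagonal (fun i => Y i * r i) * X =
      !![∑ i, r i * Y i * (1 - A i) + ∑ i, r i * Y i * A i, ∑ i, r i * Y i * A i;
        ∑ i, r i * Y i * A i, ∑ i, r i * Y i * A i] := by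
  ext j k
  rw [transpose_mul_diagonal_mul_apply, ← Finset.sum_add_distrib]
  fin_cases j <;> fin_cases k <;> refine Finset.sum_congr rfl fun i _ => ?_ <;> grind

lemma indicator_design_moment (hY : ∀ i, Y i = 0 ∨ Y i = 1) (hA : ∀ i, A i = 0 ∨ A i = 1)
    (hX : ∀ i, X i 0 = Y i ∧ X i 1 = Y i * A i) (lam : ι → K) :
    (Xᵀ * diagonal (fun i => Y i * r i)) *ᵥ lam =
      ![∑ i, r i * Y i * (1 - A i) * lam i + ∑ i, r i * Y i * A i * lam i,
        ∑ i, r i * Y i * A i * lam i] := by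
  ext j
  rw [transpose_mul_diagonal_mulVec_apply, ← Finset.sum_add_distrib]
  fin_cases j <;> refine Finset.sum_congr rfl fun i _ => ?_ <;> grind

end IndicatorDesign

theorem weighted_least_squares_integrand_general
    (m : ℕ) (Y A : Fin m → ℝ)
    (hY : ∀ i, Y i = 0 ∨ Y i = 1) (hA : ∀ i, A i = 0 ∨ A i = 1)
    (r : Fin m → ℝ)
    (lam : Fin m → ℝ)
    (X : Matrix (Fin m) (Fin 2) ℝ)
    (hX : ∀ i, X i 0 = Y i ∧ X i 1 = Y i * A i)
    (R : Matrix (Fin m) (Fin m) ℝ)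
    (hR : R = Matrix.diagonal fun i => Y i * r i)
    (a b : ℝ)
    (ha' : a = ∑ i, r i * Y i * (1 - A i)) (hb' : b = ∑ i, r i * Y i * A i)
    (ha : 0 < a) (hb : 0 < b)
    (H0 H1 : ℝ)
    (hH0 : H0 = (∑ i, r i * Y i * (1 - A i) * lam i) / a)
    (hH1 : H1 = (∑ i, r i * Y i * A i * lam i) / b) :
    ((Xᵀ * R * X)⁻¹ * Xᵀ * R) *ᵥ lam = ![H0, H1 - H0] := by
  have hgram : Xᵀ * R * X = !![a + b, b; b, b] := by
    rw [hR, indicator_design_gram hY hA hX, ha', hb']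
  rw [Matrix.mul_assoc]
  refine inv_mul_mulVec_eq_of_mulVec_eq ?_ ?_
  · rw [hgram, det_fin_two_of, show (a + b) * b - b * b = a * b by ring]
    exact (mul_pos ha hb).ne'.isUnit
  · rw [hgram, hR, indicator_design_moment hY hA hX, hH0, hH1]
    exact two_group_gram_mulVec ha.ne' hb.ne' _ _

/-- The weighted least-squares integrand of the additive hazard estimator: with positive
weighted risk-group sums `a` and `b`, the vector `(XᵀRX)⁻¹ XᵀR λ` equals `(H⁰, H¹ − H⁰)`,
where `H⁰` and `H¹` are the weighted averages of `λ` over the untreated and treated at-risk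
groups. -/
theorem weighted_least_squares_integrand
    (m : ℕ) (Y A : Fin m → ℝ)
    (hY : ∀ i, Y i = 0 ∨ Y i = 1) (hA : ∀ i, A i = 0 ∨ A i = 1)
    (r : Fin m → ℝ) (hr : ∀ i, 0 ≤ r i)
    (lam : Fin m → ℝ)
    (X : Matrix (Fin m) (Fin 2) ℝ)
    (hX : ∀ i, X i 0 = Y i ∧ X i 1 = Y i * A i)
    (R : Matrix (Fin m) (Fin m) ℝ)
    (hR : R = Matrix.diagonal fun i => Y i * r i)
    (a b : ℝ)
    (ha' : a = ∑ i, r i * Y i * (1 - A i)) (hb' : b = ∑ i, r i * Y i * A i)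
    (ha : 0 < a) (hb : 0 < b)
    (H0 H1 : ℝ)
    (hH0 : H0 = (∑ i, r i * Y i * (1 - A i) * lam i) / a)
    (hH1 : H1 = (∑ i, r i * Y i * A i * lam i) / b) :
    ((Xᵀ * R * X)⁻¹ * Xᵀ * R) *ᵥ lam = ![H0, H1 - H0] :=
  weighted_least_squares_integrand_general m Y A hY hA r lam X hX R hR a b ha' hb' ha hb H0 H1 hH0
    hH1
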